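/- Let n ≥ 5 and suppose H(x) = r^{4-n} + B + α(x) and Γ(x) = r^{2-n} + C + β(x) near 0 in ℝ^n, where α, β are smooth with α(0) = β(0) = 0. Then Γ^{2/(n-2)} · H = r^{2-n} + B r^{-2} + O(r^{-1}) as r → 0, i.e., there exist constants K, δ > 0 with |Γ(x)^{2/(n-2)} H(x) - ‖x‖^{2-n} - B‖x‖^{-2}| ≤ K ‖x‖^{-1} for 0 < ‖x‖ < δ. -/

import Mathlib

/-!
With `r = ‖x‖`, factor `Γ = r^(2-n) (1 + u)` where `u = (C + β x) r^(n-2) = O(r^(n-2))`, so that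
`Γ^(2/(n-2)) = r^(-2) (1 + u)^(2/(n-2))`. Since `r^(-2) H = r^(2-n) + B r^(-2) + r^(-2) α x`, the
error term is `r^(-2) ((1 + u)^(2/(n-2)) - 1) H + r^(-2) α x`. As `t ↦ (1 + t)^(2/(n-2))` is
differentiable at `0` and `H = O(r^(4-n))` for `n ≥ 4`, the first summand is
`O(r^(-2) · r^(n-2) · r^(4-n)) = O(1)`; the second is `O(r^(-2) · r)` because `α` is differentiable
with `α 0 = 0`.
-/

open Asymptotics Filter Topology

lemma isBigO_one_add_rpow_sub_one (p : ℝ) :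
    (fun t : ℝ => (1 + t) ^ p - 1) =O[𝓝 0] fun t => t := by
  have hd : DifferentiableAt ℝ (fun t : ℝ => (1 + t) ^ p) 0 :=
    (((hasDerivAt_id 0).const_add 1).rpow_const (Or.inl (by norm_num))).differentiableAt
  simpa using hd.isBigO_sub

lemma zpow_two_sub_rpow_two_div {n : ℕ} (hn : n ≠ 2) {r : ℝ} (hr : 0 ≤ r) :
    (r ^ ((2 : ℤ) - n)) ^ ((2 : ℝ) / ((n : ℝ) - 2)) = r ^ (-2 : ℤ) := by
  have hn' : (n : ℝ) - 2 ≠ 0 := sub_ne_zero.2 (by exact_mod_cast hn)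
  rw [← Real.rpow_intCast, ← Real.rpow_intCast, ← Real.rpow_mul hr]
  congr 1
  push_cast
  field_simp
  ring

lemma green_product_sub_eq {n : ℕ} (hn : n ≠ 2) {r : ℝ} (hr : 0 < r) (a b B C : ℝ)
    (hu : 0 ≤ 1 + (C + b) * r ^ ((n : ℤ) - 2)) :
    (r ^ ((2 : ℤ) - n) + C + b) ^ ((2 : ℝ) / ((n : ℝ) - 2)) * (r ^ ((4 : ℤ) - n) + B + a)
        - r ^ ((2 : ℤ) - n) - B * r ^ (-2 : ℤ)
      = r ^ (-2 : ℤ) * ((1 + (C + b) * r ^ ((n : ℤ) - 2)) ^ ((2 : ℝ) / ((n : ℝ) - 2)) - 1)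
          * (r ^ ((4 : ℤ) - n) + B + a) + r ^ (-2 : ℤ) * a := by
  have hinv : r ^ ((2 : ℤ) - n) * r ^ ((n : ℤ) - 2) = 1 := by
    rw [← zpow_add₀ hr.ne']; simp
  have hshift : r ^ (-2 : ℤ) * r ^ ((4 : ℤ) - n) = r ^ ((2 : ℤ) - n) := by
    rw [← zpow_add₀ hr.ne']; ring_nf
  have hfactor : r ^ ((2 : ℤ) - n) + C + b
      = r ^ ((2 : ℤ) - n) * (1 + (C + b) * r ^ ((n : ℤ) - 2)) := by
    linear_combination -(C + b) * hinv
  rw [hfactor, Real.mul_rpow (zpow_nonneg hr.le _) hu, zpow_two_sub_rpow_two_div hn hr.le]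
  linear_combination hshift

section

variable {E : Type*} [NormedAddCommGroup E]

lemma DifferentiableAt.isBigO_norm_of_eq_zero [NormedSpace ℝ E] {γ : E → ℝ}
    (hγ : DifferentiableAt ℝ γ 0) (hγ0 : γ 0 = 0) : γ =O[𝓝 0] (‖·‖) := by
  simpa [hγ0] using hγ.isBigO_sub.norm_right

lemma Asymptotics.IsBigO.const_add_isBigO_one {γ : E → ℝ} (hγ : γ =O[𝓝 0] (‖·‖)) (c : ℝ) :
    (fun x => c + γ x) =O[𝓝 0] fun _ => (1 : ℝ) :=
  (isBigO_const_const c one_ne_zero _).add (hγ.trans (tendsto_norm_zero.isBigO_one ℝ))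

lemma isBigO_one_norm_zpow_of_nonpos {k : ℤ} (hk : k ≤ 0) :
    (fun _ => (1 : ℝ)) =O[𝓝[≠] (0 : E)] fun x => ‖x‖ ^ k := by
  refine IsBigO.of_bound' ?_
  filter_upwards [tendsto_norm_nhdsNE_zero (Ioo_mem_nhdsGT one_pos)] with x ⟨hx0, hx1⟩
  rw [norm_one, Real.norm_of_nonneg (zpow_nonneg hx0.le k)]
  exact one_le_zpow_of_nonpos₀ hx0 hx1.le hk

theorem isBigO_green_product {n : ℕ} (hn : 4 ≤ n) (B C : ℝ) {α β : E → ℝ}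
    (hα : α =O[𝓝 0] (‖·‖)) (hβ : β =O[𝓝 0] (‖·‖)) :
    (fun x => (‖x‖ ^ ((2 : ℤ) - n) + C + β x) ^ ((2 : ℝ) / ((n : ℝ) - 2))
        * (‖x‖ ^ ((4 : ℤ) - n) + B + α x) - ‖x‖ ^ ((2 : ℤ) - n) - B * ‖x‖ ^ (-2 : ℤ))
      =O[𝓝[≠] 0] fun x => ‖x‖ ^ (-1 : ℤ) := by
  set u : E → ℝ := fun x => (C + β x) * ‖x‖ ^ ((n : ℤ) - 2)
  have hu : u =O[𝓝[≠] 0] fun x => ‖x‖ ^ ((n : ℤ) - 2) := by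
    simpa using ((hβ.const_add_isBigO_one C).mono nhdsWithin_le_nhds).mul
      (isBigO_refl (fun x => ‖x‖ ^ ((n : ℤ) - 2)) _)
  have hu0 : Tendsto u (𝓝[≠] 0) (𝓝 0) := by
    refine hu.trans_tendsto ?_
    have hexp : (n : ℤ) - 2 = ((n - 2 : ℕ) : ℤ) := by omega
    simp only [hexp, zpow_natCast]
    simpa [zero_pow (show n - 2 ≠ 0 by omega)] using
      ((tendsto_norm_zero (E := E)).pow (n - 2)).mono_left nhdsWithin_le_nhds
  have hw := (isBigO_one_add_rpow_sub_one ((2 : ℝ) / ((n : ℝ) - 2))).comp_tendsto hu0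
  have hH : (fun x => ‖x‖ ^ ((4 : ℤ) - n) + B + α x)
      =O[𝓝[≠] 0] fun x => ‖x‖ ^ ((4 : ℤ) - n) := by
    simpa [add_assoc] using (isBigO_refl _ _).add
      (((hα.const_add_isBigO_one B).mono nhdsWithin_le_nhds).trans
        (isBigO_one_norm_zpow_of_nonpos (k := (4 : ℤ) - n) (by omega)))
  have hpos : ∀ᶠ x in 𝓝[≠] (0 : E), 0 < ‖x‖ := by
    filter_upwards [self_mem_nhdsWithin] with x hx using norm_pos_iff.2 hx
  have hcancel : (fun x : E => ‖x‖ ^ (-2 : ℤ) * ‖x‖ ^ ((n : ℤ) - 2) * ‖x‖ ^ ((4 : ℤ) - n))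
      =ᶠ[𝓝[≠] 0] fun _ => (1 : ℝ) := by
    filter_upwards [hpos] with x hx
    rw [← zpow_add₀ hx.ne', ← zpow_add₀ hx.ne']
    ring_nf
    exact zpow_zero _
  have hshift : (fun x : E => ‖x‖ ^ (-2 : ℤ) * ‖x‖) =ᶠ[𝓝[≠] 0] fun x => ‖x‖ ^ (-1 : ℤ) := by
    filter_upwards [hpos] with x hx
    rw [← zpow_add_one₀ hx.ne']
    norm_num
  have hw_term := ((((isBigO_refl _ _).mul (hw.trans hu)).mul hH).trans_eventuallyEq
    hcancel).trans (isBigO_one_norm_zpow_of_nonpos (E := E) (k := -1) (by norm_num))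
  have hα_term := (((isBigO_refl _ _).mul (hα.mono nhdsWithin_le_nhds)).trans_eventuallyEq hshift)
  refine (hw_term.add hα_term).congr' ?_ EventuallyEq.rfl
  filter_upwards [hpos, hu0 (Ioi_mem_nhds (show (-1 : ℝ) < 0 by norm_num))] with x hx hux
  exact (green_product_sub_eq (by omega) hx _ _ B C (neg_lt_iff_pos_add'.1 hux).le).symm

lemma Asymptotics.IsBigO.exists_pos_bound_nhdsNE_zero {f g : E → ℝ} (h : f =O[𝓝[≠] 0] g) :
    ∃ K δ : ℝ, 0 < K ∧ 0 < δ ∧ ∀ x : E, 0 < ‖x‖ → ‖x‖ < δ → |f x| ≤ K * |g x| := by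
  obtain ⟨K, hK, hKg⟩ := h.exists_pos
  obtain ⟨δ, hδ, hbound⟩ :=
    Metric.eventually_nhds_iff.1 (eventually_nhdsWithin_iff.1 hKg.bound)
  exact ⟨K, δ, hK, hδ, fun x hx hxδ => hbound (by simpa using hxδ) (norm_pos_iff.1 hx)⟩

end

theorem green_product_expansion (n : ℕ) (hn : 5 ≤ n) (B C : ℝ)
    (α β : EuclideanSpace ℝ (Fin n) → ℝ)
    (hα : ContDiff ℝ 1 α) (hβ : ContDiff ℝ 1 β)
    (hα0 : α 0 = 0) (hβ0 : β 0 = 0) :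
    ∃ K δ : ℝ, 0 < K ∧ 0 < δ ∧ ∀ x : EuclideanSpace ℝ (Fin n),
      0 < ‖x‖ → ‖x‖ < δ →
      |(‖x‖ ^ ((2 : ℤ) - n) + C + β x) ^ ((2 : ℝ) / ((n : ℝ) - 2)) *
          (‖x‖ ^ ((4 : ℤ) - n) + B + α x)
        - ‖x‖ ^ ((2 : ℤ) - n) - B * ‖x‖ ^ (-2 : ℤ)| ≤ K * ‖x‖⁻¹ := by
  obtain ⟨K, δ, hK, hδ, hbound⟩ := (isBigO_green_product (by omega : 4 ≤ n) B C
    ((hα.differentiable one_ne_zero 0).isBigO_norm_of_eq_zero hα0)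
    ((hβ.differentiable one_ne_zero 0).isBigO_norm_of_eq_zero hβ0)).exists_pos_bound_nhdsNE_zero
  refine ⟨K, δ, hK, hδ, fun x hx hxδ => ?_⟩
  simpa using hbound x hx hxδ
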